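/- arXiv:2107.08480 — 2 statements merged into one kernel-verified Lean document; each statement's English description precedes it below -/
import Mathlib

section
/- Let π be a permutation of {1,...,n}. The maximum size of an induced matching in G(π) equals the maximum length of a chain of matches (a sequence e₁ < e₂ < ... < e_k under the order e < e' iff y < x' and π⁻¹(x) < π⁻¹(y')). -/
def permGraph {n : ℕ} (π : Equiv.Perm (Fin n)) : SimpleGraph (Fin n) where
  Adj u v := (u < v ∧ π.symm v < π.symm u) ∨ (v < u ∧ π.symm u < π.symm v)
  symm := by constructor; intro u v h; tauto
  loopless := by constructor; intro u h; rcases h with ⟨h, _⟩ | ⟨h, _⟩ <;> exact lt_irrefl u h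

def IsMatch {n : ℕ} (π : Equiv.Perm (Fin n)) (x y : Fin n) : Prop :=
  x < y ∧ π.symm y < π.symm x

def MatchLT {n : ℕ} (π : Equiv.Perm (Fin n)) (e e' : Fin n × Fin n) : Prop :=
  e.2 < e'.1 ∧ π.symm e.1 < π.symm e'.2

def IsInducedMatching {V : Type*} (G : SimpleGraph V) (M : Set (Sym2 V)) : Prop :=
  M ⊆ G.edgeSet ∧
    ∀ e ∈ M, ∀ f ∈ M, e ≠ f → ∀ u ∈ e, ∀ v ∈ f, u ≠ v ∧ ¬ G.Adj u v

/-!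
Two edges of `G(π)` are disjoint and joined by no edge exactly when one of them lies entirely
below and to the left of the other in the diagram of `π`, i.e. when they are comparable under
`MatchLT`. Since `MatchLT` is transitive through matches, the matches of a chain are pairwise
comparable and so form an induced matching; conversely the edges of an induced matching, sorted
by their smaller endpoint, form a chain.
-/

open Finset

theorem Sym2.injOn_mk_of_lt {α : Type*} [LinearOrder α] :
    Set.InjOn (fun p : α × α => s(p.1, p.2)) {p | p.1 < p.2} := by
  rintro p (hp : p.1 < p.2) q (hq : q.1 < q.2) h
  rcases Sym2.mk_eq_mk_iff.1 h with rfl | rfl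
  · rfl
  · exact absurd hq (lt_asymm hp)

theorem Finset.exists_seq_mem_and_lt_succ {α : Type*} [LinearOrder α] [Nonempty α]
    (s : Finset α) :
    ∃ e : ℕ → α, (∀ i < #s, e i ∈ s) ∧ ∀ i, i + 1 < #s → e i < e (i + 1) := by
  refine ⟨fun i => if h : i < #s then s.orderEmbOfFin rfl ⟨i, h⟩ else Classical.arbitrary α,
    fun i hi => ?_, fun i hi => ?_⟩
  · simp only [dif_pos hi]
    exact s.orderEmbOfFin_mem rfl _
  · simp only [dif_pos hi, dif_pos (Nat.lt_of_succ_lt hi)]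
    exact (s.orderEmbOfFin rfl).strictMono (Fin.mk_lt_mk.2 i.lt_succ_self)

variable {n : ℕ} (π : Equiv.Perm (Fin n))

theorem permGraph_adj_iff {u v : Fin n} :
    (permGraph π).Adj u v ↔ IsMatch π u v ∨ IsMatch π v u := Iff.rfl

theorem ne_and_not_permGraph_adj_iff {u v : Fin n} :
    u ≠ v ∧ ¬ (permGraph π).Adj u v ↔
      (u < v ∧ π.symm u < π.symm v) ∨ (v < u ∧ π.symm v < π.symm u) := by
  have : u ≠ v ↔ π.symm u ≠ π.symm v := π.symm.injective.ne_iff.symm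
  simp only [permGraph_adj_iff, IsMatch]
  omega

theorem exists_isMatch_of_mem_edgeSet {z : Sym2 (Fin n)} (hz : z ∈ (permGraph π).edgeSet) :
    ∃ p : Fin n × Fin n, IsMatch π p.1 p.2 ∧ s(p.1, p.2) = z := by
  induction z using Sym2.ind with
  | _ a b =>
    rcases hz with h | h
    · exact ⟨(a, b), h, rfl⟩
    · exact ⟨(b, a), h, Sym2.eq_swap⟩

theorem forall_mem_ne_and_not_adj_iff {p q : Fin n × Fin n} (hp : IsMatch π p.1 p.2)
    (hq : IsMatch π q.1 q.2) :
    (∀ u ∈ s(p.1, p.2), ∀ v ∈ s(q.1, q.2), u ≠ v ∧ ¬ (permGraph π).Adj u v) ↔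
      MatchLT π p q ∨ MatchLT π q p := by
  unfold IsMatch at hp hq
  simp only [Sym2.mem_iff, MatchLT, ne_and_not_permGraph_adj_iff]
  constructor
  · intro h
    have h₁₁ := h p.1 (.inl rfl) q.1 (.inl rfl)
    have h₁₂ := h p.1 (.inl rfl) q.2 (.inr rfl)
    have h₂₁ := h p.2 (.inr rfl) q.1 (.inl rfl)
    have h₂₂ := h p.2 (.inr rfl) q.2 (.inr rfl)
    omega
  · rintro (h | h) u (rfl | rfl) v (rfl | rfl) <;> omega

variable {π}

theorem MatchLT.trans {p q r : Fin n × Fin n} (hpq : MatchLT π p q) (hq : IsMatch π q.1 q.2)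
    (hqr : MatchLT π q r) : MatchLT π p r :=
  ⟨hpq.1.trans (hq.1.trans hqr.1), hpq.2.trans (hq.2.trans hqr.2)⟩

theorem MatchLT.fst_lt {p q : Fin n × Fin n} (hpq : MatchLT π p q) (hp : IsMatch π p.1 p.2) :
    p.1 < q.1 :=
  hp.1.trans hpq.1

section Chain

variable {e : ℕ → Fin n × Fin n} {k : ℕ} (hmatch : ∀ i < k, IsMatch π (e i).1 (e i).2)
  (hchain : ∀ i, i + 1 < k → MatchLT π (e i) (e (i + 1)))
include hmatch hchain

theorem matchLT_of_chain {i j : ℕ} (hij : i < j) (hj : j < k) : MatchLT π (e i) (e j) := by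
  induction j, hij using Nat.le_induction with
  | base => exact hchain i hj
  | succ j hij ih => exact (ih (by omega)).trans (hmatch j (by omega)) (hchain j hj)

theorem exists_isInducedMatching_of_chain :
    ∃ M : Finset (Sym2 (Fin n)), IsInducedMatching (permGraph π) ↑M ∧ #M = k := by
  have hsep : ∀ i < k, ∀ j < k, i ≠ j →
      ∀ u ∈ s((e i).1, (e i).2), ∀ v ∈ s((e j).1, (e j).2),
        u ≠ v ∧ ¬ (permGraph π).Adj u v := by
    intro i hi j hj hij
    rw [forall_mem_ne_and_not_adj_iff π (hmatch i hi) (hmatch j hj)]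
    rcases hij.lt_or_gt with h | h
    · exact .inl (matchLT_of_chain hmatch hchain h hj)
    · exact .inr (matchLT_of_chain hmatch hchain h hi)
  refine ⟨(range k).image fun i => s((e i).1, (e i).2), ⟨?_, ?_⟩, ?_⟩
  · simp only [coe_image, coe_range, Set.image_subset_iff]
    exact fun i hi => Or.inl (hmatch i hi)
  · simp only [coe_image, coe_range, Set.forall_mem_image]
    exact fun i hi j hj hij => hsep i hi j hj (by rintro rfl; exact hij rfl)
  · rw [card_image_of_injOn, card_range]
    intro i hi j hj (hij : s((e i).1, (e i).2) = s((e j).1, (e j).2))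
    rw [mem_coe, mem_range] at hi hj
    by_contra hne
    exact (hsep i hi j hj hne _ (Sym2.mem_mk_left _ _) _ (hij ▸ Sym2.mem_mk_left _ _)).1 rfl

end Chain

theorem matchLT_of_toLex_lt {M : Set (Sym2 (Fin n))} (hM : IsInducedMatching (permGraph π) M)
    {p q : Fin n × Fin n} (hp : IsMatch π p.1 p.2) (hq : IsMatch π q.1 q.2)
    (hpM : s(p.1, p.2) ∈ M) (hqM : s(q.1, q.2) ∈ M) (hpq : toLex p < toLex q) :
    MatchLT π p q := by
  have hne : s(p.1, p.2) ≠ s(q.1, q.2) := fun h =>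
    hpq.ne (congrArg toLex (Sym2.injOn_mk_of_lt hp.1 hq.1 h))
  have hfst : p.1 ≤ q.1 := (Prod.Lex.lt_iff.1 hpq).elim le_of_lt (·.1.le)
  refine ((forall_mem_ne_and_not_adj_iff π hp hq).1 (hM.2 _ hpM _ hqM hne)).resolve_right ?_
  exact fun h => hfst.not_gt (h.fst_lt hq)

theorem exists_chain_of_isInducedMatching [Nonempty (Fin n)] {M : Finset (Sym2 (Fin n))}
    (hM : IsInducedMatching (permGraph π) ↑M) :
    ∃ e : ℕ → Fin n × Fin n, (∀ i < #M, IsMatch π (e i).1 (e i).2) ∧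
      ∀ i, i + 1 < #M → MatchLT π (e i) (e (i + 1)) := by
  classical
  set P := univ.filter fun p : Fin n × Fin n => IsMatch π p.1 p.2 ∧ s(p.1, p.2) ∈ M
  have hP : ∀ {p}, p ∈ P ↔ IsMatch π p.1 p.2 ∧ s(p.1, p.2) ∈ M := by simp [P]
  have hcard : #P = #M := by
    refine card_nbij (fun p => s(p.1, p.2)) (fun p hp => (hP.1 hp).2) ?_ ?_
    · exact Sym2.injOn_mk_of_lt.mono fun p hp => (hP.1 hp).1.1
    · intro z hz
      obtain ⟨p, hp, rfl⟩ := exists_isMatch_of_mem_edgeSet π (hM.1 hz)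
      exact ⟨p, hP.2 ⟨hp, hz⟩, rfl⟩
  obtain ⟨e, hmem, hlt⟩ := (P.map toLex.toEmbedding).exists_seq_mem_and_lt_succ
  simp only [card_map, hcard, mem_map_equiv] at hmem hlt
  refine ⟨fun i => ofLex (e i), fun i hi => (hP.1 (hmem i hi)).1, fun i hi => ?_⟩
  obtain ⟨hp, hpM⟩ := hP.1 (hmem i (by omega))
  obtain ⟨hq, hqM⟩ := hP.1 (hmem (i + 1) hi)
  exact matchLT_of_toLex_lt hM hp hq hpM hqM (hlt i hi)

/-- The maximum size of an induced matching in `G(π)` equals the maximum length of a chain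
of matches under the order `MatchLT`. -/
theorem stmt_6 {n : ℕ} (π : Equiv.Perm (Fin n)) :
    sSup {k : ℕ | ∃ M : Finset (Sym2 (Fin n)),
        IsInducedMatching (permGraph π) ↑M ∧ M.card = k} =
      sSup {k : ℕ | ∃ e : ℕ → Fin n × Fin n,
        (∀ i < k, IsMatch π (e i).1 (e i).2) ∧
        (∀ i, i + 1 < k → MatchLT π (e i) (e (i + 1)))} := by
  rcases isEmpty_or_nonempty (Fin n) with hn | hn
  -- For `n = 0` no sequence `ℕ → Fin 0 × Fin 0` exists, so the two sets differ ({0} and ∅),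
  -- but both suprema are `0`.
  · have hzero (s : Set ℕ) (hs : ∀ k ∈ s, k = 0) : sSup s = 0 :=
      Nat.le_zero.1 (csSup_le' fun k hk => (hs k hk).le)
    rw [hzero _ ?_, hzero _ ?_]
    · rintro k ⟨e, -⟩
      exact isEmptyElim (e 0).1
    · rintro k ⟨M, -, rfl⟩
      rw [M.eq_empty_of_isEmpty, card_empty]
  · congr 1
    ext k
    constructor
    · rintro ⟨M, hM, rfl⟩
      exact exists_chain_of_isInducedMatching hM
    · rintro ⟨e, hmatch, hchain⟩
      exact exists_isInducedMatching_of_chain hmatch hchain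
end

section
/- Let τ be a family of trapezoids with all coordinates distinct. The maximum size of an induced matching in the trapezoid graph G(τ) equals the maximum length of a chain of matches under the relation e < e' iff max(A.x₂,B.x₂) < min(A'.x₁,B'.x₁) and max(A.y₂,B.y₂) < min(A'.y₁,B'.y₁). -/
structure Trapezoid where
  x1 : ℝ
  x2 : ℝ
  y1 : ℝ
  y2 : ℝ
  hx : x1 ≤ x2
  hy : y1 ≤ y2

def SegCross (a b c d : ℝ) : Prop := (a - c) * (b - d) < 0

def TrapIntersect (A B : Trapezoid) : Prop :=
  SegCross A.x1 A.y2 B.x1 B.y2 ∨ SegCross A.x1 A.y2 B.x2 B.y1 ∨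
    SegCross A.x2 A.y1 B.x1 B.y2 ∨ SegCross A.x2 A.y1 B.x2 B.y1

/-- The trapezoid graph `G(τ)`: vertices are the trapezoids of `τ`, edges are intersecting
pairs. -/
def trapGraph (τ : Set Trapezoid) : SimpleGraph τ where
  Adj A B := A ≠ B ∧ TrapIntersect A B
  symm := by
    constructor
    intro A B ⟨hne, h⟩
    refine ⟨hne.symm, ?_⟩
    rcases h with h | h | h | h
    · exact Or.inl (by unfold SegCross at *; nlinarith)
    · exact Or.inr (Or.inr (Or.inl (by unfold SegCross at *; nlinarith)))
    · exact Or.inr (Or.inl (by unfold SegCross at *; nlinarith))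
    · exact Or.inr (Or.inr (Or.inr (by unfold SegCross at *; nlinarith)))
  loopless := by constructor; intro A h; exact h.1 rfl

def DistinctCoords (τ : Set Trapezoid) : Prop :=
  ∀ A ∈ τ, ∀ B ∈ τ, A ≠ B →
    ([A.x1, A.x2, B.x1, B.x2] : List ℝ).Pairwise (· ≠ ·) ∧
    ([A.y1, A.y2, B.y1, B.y2] : List ℝ).Pairwise (· ≠ ·)

def TrapMatch (A B : Trapezoid) : Prop :=
  A.x2 < B.x2 ∧ (B.x1 ≤ A.x2 ∨ B.y1 ≤ A.y2)

def TrapMatchLT (e e' : Trapezoid × Trapezoid) : Prop :=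
  max e.1.x2 e.2.x2 < min e'.1.x1 e'.2.x1 ∧ max e.1.y2 e.2.y2 < min e'.1.y1 e'.2.y1

/-!
With distinct coordinates, two trapezoids fail to intersect exactly when one lies strictly to the
left of and below the other (`Trapezoid.Below`), and an intersecting pair ordered by right
`x`-ends is a match. In an induced matching the four cross pairs of two edges do not intersect,
so they are all comparable under `Below`, and since the two edges themselves intersect, these
comparisons all point the same way: the edges, oriented as matches, are totally ordered by
`TrapMatchLT`. Conversely all pairs of a chain of matches are separated by `Below`, so its edges
form an induced matching. The empty matching only adds `0`, which does not change a supremum in `ℕ`.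
-/

theorem Nat.sSup_insert_zero (s : Set ℕ) : sSup (insert 0 s) = sSup s := by
  by_cases hs : BddAbove s
  · rw [csSup_insert' hs, bot_eq_zero.symm, bot_sup_eq]
  · rw [csSup_of_not_bddAbove hs, csSup_of_not_bddAbove (bddAbove_insert.not.2 hs)]

theorem Nat.rel_of_forall_rel_succ_of_lt_of_lt {β : Type*} (r : β → β → Prop) [IsTrans β r]
    {f : ℕ → β} {k : ℕ} (h : ∀ n, n + 1 < k → r (f n) (f (n + 1))) {m n : ℕ} (hmn : m < n)
    (hn : n < k) : r (f m) (f n) := by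
  induction hmn with
  | refl => exact h _ hn
  | step _ ih => exact _root_.trans (ih (by omega)) (h _ hn)

theorem Finset.exists_seq_rel_of_lt {α β : Type*} [LinearOrder β] {r : α → α → Prop}
    {S : Finset α} (hS : S.Nonempty) (key : α → β)
    (hkey : ∀ a ∈ S, ∀ b ∈ S, r a b → key a < key b)
    (htot : ∀ a ∈ S, ∀ b ∈ S, a ≠ b → r a b ∨ r b a) :
    ∃ f : ℕ → α, (∀ n, f n ∈ S) ∧ ∀ m n, m < n → n < S.card → r (f m) (f n) := by
  classical
  have hinj : Set.InjOn key S := by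
    intro a ha b hb hab
    by_contra hne
    rcases htot a ha b hb hne with h | h
    · exact (hkey a ha b hb h).ne hab
    · exact (hkey b hb a ha h).ne hab.symm
  have hcard : (S.image key).card = S.card := card_image_of_injOn hinj
  have hpre : ∀ i : Fin S.card, ∃ a ∈ S, key a = (S.image key).orderEmbOfFin hcard i :=
    fun i ↦ mem_image.1 ((S.image key).orderEmbOfFin_mem hcard i)
  choose g hgS hgkey using hpre
  obtain ⟨a₀, ha₀⟩ := hS
  refine ⟨fun n ↦ if h : n < S.card then g ⟨n, h⟩ else a₀, fun n ↦ ?_, fun m n hmn hn ↦ ?_⟩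
  · dsimp only
    split_ifs
    exacts [hgS _, ha₀]
  · simp only [dif_pos hn, dif_pos (hmn.trans hn)]
    have hlt : key (g ⟨m, hmn.trans hn⟩) < key (g ⟨n, hn⟩) := by
      rw [hgkey, hgkey]
      exact ((S.image key).orderEmbOfFin hcard).strictMono hmn
    refine (htot _ (hgS _) _ (hgS _) fun h ↦ hlt.ne (congrArg key h)).resolve_right fun h ↦ ?_
    exact (hkey _ (hgS _) _ (hgS _) h).not_gt hlt

theorem isInducedMatching_image {V ι : Type*} [DecidableEq V] {G : SimpleGraph V}
    {s : Finset ι} {z : ι → Sym2 V} (hz : ∀ i ∈ s, z i ∈ G.edgeSet)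
    (hsep : ∀ i ∈ s, ∀ j ∈ s, i ≠ j → ∀ u ∈ z i, ∀ v ∈ z j, u ≠ v ∧ ¬ G.Adj u v) :
    IsInducedMatching G ↑(s.image z) ∧ (s.image z).card = s.card := by
  refine ⟨⟨?_, ?_⟩, Finset.card_image_of_injOn fun i hi j hj hij ↦ ?_⟩
  · intro e he
    obtain ⟨i, hi, rfl⟩ := Finset.mem_image.1 he
    exact hz i hi
  · intro e he f hf hef
    obtain ⟨i, hi, rfl⟩ := Finset.mem_image.1 he
    obtain ⟨j, hj, rfl⟩ := Finset.mem_image.1 hf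
    exact hsep i hi j hj fun h ↦ hef (h ▸ rfl)
  · by_contra hne
    have hu := (z i).out_fst_mem
    exact (hsep i hi j hj hne _ hu _ (hij ▸ hu)).1 rfl

theorem segCross_comm {a b c d : ℝ} : SegCross a b c d ↔ SegCross c d a b := by
  unfold SegCross
  rw [show (c - a) * (d - b) = (a - c) * (b - d) by ring]

theorem TrapIntersect.symm {A B : Trapezoid} (h : TrapIntersect A B) : TrapIntersect B A := by
  unfold TrapIntersect at *
  simp only [segCross_comm (a := A.x1), segCross_comm (a := A.x2)] at h
  tauto

namespace Trapezoid

def Below (A B : Trapezoid) : Prop := A.x2 < B.x1 ∧ A.y2 < B.y1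

theorem Below.trans {A B C : Trapezoid} (hAB : Below A B) (hBC : Below B C) : Below A C :=
  ⟨hAB.1.trans (B.hx.trans_lt hBC.1), hAB.2.trans (B.hy.trans_lt hBC.2)⟩

theorem Below.ne {A B : Trapezoid} (h : Below A B) : A ≠ B := by
  rintro rfl
  exact (h.1.trans_le A.hx).false

theorem Below.not_trapIntersect {A B : Trapezoid} (h : Below A B) : ¬ TrapIntersect A B := by
  unfold TrapIntersect SegCross
  rintro (hc | hc | hc | hc) <;>
    exact (mul_pos_of_neg_of_neg (by linarith [A.hx, B.hx, h.1])
      (by linarith [A.hy, B.hy, h.2])).not_gt hc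

theorem Below.not_adj {τ : Set Trapezoid} {u v : τ} (h : Below u v) :
    ¬ (trapGraph τ).Adj u v :=
  fun huv ↦ h.not_trapIntersect huv.2

end Trapezoid

open Trapezoid

theorem trapMatchLT_iff {A B C D : Trapezoid} :
    TrapMatchLT (A, B) (C, D) ↔ Below A C ∧ Below A D ∧ Below B C ∧ Below B D := by
  simp only [TrapMatchLT, Below, max_lt_iff, lt_min_iff]
  tauto

instance : IsTrans (Trapezoid × Trapezoid) TrapMatchLT where
  trans := by
    rintro ⟨A, B⟩ ⟨C, D⟩ ⟨E, F⟩ h₁ h₂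
    rw [trapMatchLT_iff] at *
    exact ⟨h₁.1.trans h₂.1, h₁.1.trans h₂.2.1, h₁.2.2.1.trans h₂.1, h₁.2.2.1.trans h₂.2.1⟩

theorem TrapMatchLT.x1_lt {p q : Trapezoid × Trapezoid} (h : TrapMatchLT p q) :
    p.1.x1 < q.1.x1 :=
  p.1.hx.trans_lt ((le_max_left _ _).trans_lt (h.1.trans_le (min_le_left _ _)))

theorem trapMatchLT_or_trapMatchLT {A B C D : Trapezoid} (hAB : TrapIntersect A B)
    (hCD : TrapIntersect C D) (hAC : Below A C ∨ Below C A) (hAD : Below A D ∨ Below D A)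
    (hBC : Below B C ∨ Below C B) (hBD : Below B D ∨ Below D B) :
    TrapMatchLT (A, B) (C, D) ∨ TrapMatchLT (C, D) (A, B) := by
  have nAB : ¬ Below A B := fun h ↦ h.not_trapIntersect hAB
  have nBA : ¬ Below B A := fun h ↦ h.not_trapIntersect hAB.symm
  have nCD : ¬ Below C D := fun h ↦ h.not_trapIntersect hCD
  have nDC : ¬ Below D C := fun h ↦ h.not_trapIntersect hCD.symm
  simp only [trapMatchLT_iff]
  rcases hAC with hAC | hCA
  · have hBC' := hBC.resolve_right fun h ↦ nAB (hAC.trans h)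
    have hAD' := hAD.resolve_right fun h ↦ nDC (h.trans hAC)
    exact Or.inl ⟨hAC, hAD', hBC', hBD.resolve_right fun h ↦ nDC (h.trans hBC')⟩
  · have hCB := hBC.resolve_left fun h ↦ nBA (h.trans hCA)
    have hDA := hAD.resolve_left fun h ↦ nCD (hCA.trans h)
    exact Or.inr ⟨hCA, hCB, hDA, hBD.resolve_left fun h ↦ nBA (h.trans hDA)⟩

namespace DistinctCoords

variable {τ : Set Trapezoid} (hτ : DistinctCoords τ)
include hτ

theorem coord_ne {A B : Trapezoid} (hA : A ∈ τ) (hB : B ∈ τ) (hne : A ≠ B) :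
    A.x1 ≠ B.x2 ∧ A.x2 ≠ B.x1 ∧ A.x2 ≠ B.x2 ∧ A.y1 ≠ B.y2 ∧ A.y2 ≠ B.y1 := by
  obtain ⟨hx, hy⟩ := hτ A hA B hB hne
  simp only [List.pairwise_cons, List.mem_cons, List.not_mem_nil] at hx hy
  exact ⟨hx.1 _ (by simp), hx.2.1 _ (by simp), hx.2.1 _ (by simp), hy.1 _ (by simp),
    hy.2.1 _ (by simp)⟩

theorem below_or_below {A B : Trapezoid} (hA : A ∈ τ) (hB : B ∈ τ) (hne : A ≠ B)
    (hAB : ¬ TrapIntersect A B) : Below A B ∨ Below B A := by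
  obtain ⟨hx₁₂, hx₂₁, -, hy₁₂, hy₂₁⟩ := hτ.coord_ne hA hB hne
  unfold TrapIntersect SegCross at hAB
  simp only [not_or, not_lt] at hAB
  obtain ⟨-, h₂, h₃, -⟩ := hAB
  have := A.hx; have := A.hy; have := B.hx; have := B.hy
  rcases hx₂₁.lt_or_gt with hx | hx
  · refine Or.inl ⟨hx, hy₂₁.lt_or_gt.resolve_right fun hy ↦ ?_⟩
    nlinarith
  · have hy : B.y2 < A.y1 := hy₁₂.lt_or_gt.resolve_left fun hy ↦ by nlinarith
    exact Or.inr ⟨hx₁₂.lt_or_gt.resolve_left fun hx' ↦ by nlinarith, hy⟩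

theorem trapMatch_iff {A B : Trapezoid} (hA : A ∈ τ) (hB : B ∈ τ) :
    TrapMatch A B ↔ TrapIntersect A B ∧ A.x2 < B.x2 := by
  refine ⟨fun ⟨hx, hxy⟩ ↦ ⟨by_contra fun hAB ↦ ?_, hx⟩, fun ⟨hAB, hx⟩ ↦ ⟨hx, ?_⟩⟩
  · rcases hτ.below_or_below hA hB (fun h ↦ hx.ne (h ▸ rfl)) hAB with h | h
    · rcases hxy with h' | h'
      exacts [h'.not_gt h.1, h'.not_gt h.2]
    · exact (h.1.trans_le A.hx).not_gt hx
  · by_contra! h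
    exact Below.not_trapIntersect h hAB

theorem adj_of_trapMatch {u v : τ} (h : TrapMatch u v) : (trapGraph τ).Adj u v :=
  ⟨fun huv ↦ h.1.ne (huv ▸ rfl), ((hτ.trapMatch_iff u.2 v.2).1 h).1⟩

theorem trapMatch_or_trapMatch_of_adj {u v : τ} (h : (trapGraph τ).Adj u v) :
    TrapMatch u v ∨ TrapMatch v u := by
  have hne : (u : Trapezoid) ≠ v := fun huv ↦ h.1 (Subtype.ext huv)
  rcases (hτ.coord_ne u.2 v.2 hne).2.2.1.lt_or_gt with hx | hx
  · exact Or.inl ((hτ.trapMatch_iff u.2 v.2).2 ⟨h.2, hx⟩)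
  · exact Or.inr ((hτ.trapMatch_iff v.2 u.2).2 ⟨h.2.symm, hx⟩)

/-- Stated for all of `Sym2 τ` (arbitrarily off the edge set) so that `choose` yields a total
orientation map. -/
theorem exists_trapMatch_of_mem_edgeSet (z : Sym2 τ) :
    ∃ p : τ × τ, z ∈ (trapGraph τ).edgeSet → s(p.1, p.2) = z ∧ TrapMatch p.1 p.2 := by
  induction z using Sym2.ind with
  | _ u v =>
    by_cases h : (trapGraph τ).Adj u v
    · rcases hτ.trapMatch_or_trapMatch_of_adj h with h' | h'
      exacts [⟨(u, v), fun _ ↦ ⟨rfl, h'⟩⟩, ⟨(v, u), fun _ ↦ ⟨Sym2.eq_swap, h'⟩⟩]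
    · exact ⟨(u, v), fun huv ↦ absurd huv h⟩

theorem below_or_below_of_not_adj {u v : τ} (hne : u ≠ v) (h : ¬ (trapGraph τ).Adj u v) :
    Below u v ∨ Below v u :=
  hτ.below_or_below u.2 v.2 (fun huv ↦ hne (Subtype.ext huv)) fun huv ↦ h ⟨hne, huv⟩

theorem exists_isInducedMatching_of_chain {k : ℕ} {e : ℕ → τ × τ}
    (hm : ∀ i < k, TrapMatch ((e i).1 : Trapezoid) ((e i).2 : Trapezoid))
    (hlt : ∀ i, i + 1 < k →
      TrapMatchLT (((e i).1 : Trapezoid), ((e i).2 : Trapezoid))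
        (((e (i + 1)).1 : Trapezoid), ((e (i + 1)).2 : Trapezoid))) :
    ∃ M : Finset (Sym2 τ), IsInducedMatching (trapGraph τ) ↑M ∧ M.card = k := by
  classical
  have hbelow : ∀ i j, i < j → j < k →
      ∀ u ∈ s((e i).1, (e i).2), ∀ v ∈ s((e j).1, (e j).2), Below u v := by
    intro i j hij hj u hu v hv
    have := trapMatchLT_iff.1 <| Nat.rel_of_forall_rel_succ_of_lt_of_lt TrapMatchLT
      (f := fun i ↦ (((e i).1 : Trapezoid), ((e i).2 : Trapezoid))) hlt hij hj
    rw [Sym2.mem_iff] at hu hv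
    rcases hu with rfl | rfl <;> rcases hv with rfl | rfl <;> tauto
  obtain ⟨hM, hcard⟩ := isInducedMatching_image (G := trapGraph τ) (s := Finset.range k)
    (z := fun i ↦ s((e i).1, (e i).2))
    (fun i hi ↦ hτ.adj_of_trapMatch (hm i (Finset.mem_range.1 hi)))
    (fun i hi j hj hij u hu v hv ↦ by
      rcases hij.lt_or_gt with h | h
      · have huv := hbelow i j h (Finset.mem_range.1 hj) u hu v hv
        exact ⟨ne_of_apply_ne _ huv.ne, huv.not_adj⟩
      · have hvu := hbelow j i h (Finset.mem_range.1 hi) v hv u hu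
        exact ⟨(ne_of_apply_ne _ hvu.ne).symm, fun huv ↦ hvu.not_adj huv.symm⟩)
  exact ⟨_, hM, hcard.trans (Finset.card_range k)⟩

theorem trapMatchLT_or_trapMatchLT_of_isInducedMatching {M : Set (Sym2 τ)}
    (hM : IsInducedMatching (trapGraph τ) M) {A B C D : τ} (hAB : s(A, B) ∈ M)
    (hCD : s(C, D) ∈ M) (hne : s(A, B) ≠ s(C, D)) (hmAB : TrapMatch A B)
    (hmCD : TrapMatch C D) :
    TrapMatchLT ((A : Trapezoid), (B : Trapezoid)) ((C : Trapezoid), (D : Trapezoid)) ∨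
      TrapMatchLT ((C : Trapezoid), (D : Trapezoid)) ((A : Trapezoid), (B : Trapezoid)) := by
  have cross : ∀ u ∈ s(A, B), ∀ v ∈ s(C, D), Below u v ∨ Below v u := fun u hu v hv ↦
    hτ.below_or_below_of_not_adj (hM.2 _ hAB _ hCD hne u hu v hv).1
      (hM.2 _ hAB _ hCD hne u hu v hv).2
  exact trapMatchLT_or_trapMatchLT ((hτ.trapMatch_iff A.2 B.2).1 hmAB).1
    ((hτ.trapMatch_iff C.2 D.2).1 hmCD).1
    (cross _ (Sym2.mem_mk_left _ _) _ (Sym2.mem_mk_left _ _))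
    (cross _ (Sym2.mem_mk_left _ _) _ (Sym2.mem_mk_right _ _))
    (cross _ (Sym2.mem_mk_right _ _) _ (Sym2.mem_mk_left _ _))
    (cross _ (Sym2.mem_mk_right _ _) _ (Sym2.mem_mk_right _ _))

theorem exists_chain_of_isInducedMatching {M : Finset (Sym2 τ)}
    (hM : IsInducedMatching (trapGraph τ) ↑M) (hne : M.Nonempty) :
    ∃ e : ℕ → τ × τ,
      (∀ i < M.card, TrapMatch ((e i).1 : Trapezoid) ((e i).2 : Trapezoid)) ∧
      (∀ i, i + 1 < M.card →
        TrapMatchLT (((e i).1 : Trapezoid), ((e i).2 : Trapezoid))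
          (((e (i + 1)).1 : Trapezoid), ((e (i + 1)).2 : Trapezoid))) := by
  classical
  choose orient horient using hτ.exists_trapMatch_of_mem_edgeSet
  have hmem : ∀ z ∈ M,
      s((orient z).1, (orient z).2) = z ∧ TrapMatch (orient z).1 (orient z).2 :=
    fun z hz ↦ horient z (hM.1 hz)
  have hcard : (M.image orient).card = M.card := Finset.card_image_of_injOn
    fun z hz w hw hzw ↦ (hmem z hz).1.symm.trans (hzw ▸ (hmem w hw).1)
  -- the oriented edges are sorted by the left end of their first trapezoid
  obtain ⟨e, heM, he⟩ := Finset.exists_seq_rel_of_lt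
    (r := fun p q : τ × τ ↦ TrapMatchLT (p.1, p.2) (q.1, q.2)) (hne.image orient)
    (fun p ↦ (p.1 : Trapezoid).x1) (fun _ _ _ _ h ↦ h.x1_lt) (by
      simp only [Finset.mem_image]
      rintro _ ⟨z, hz, rfl⟩ _ ⟨w, hw, rfl⟩ hzw
      refine hτ.trapMatchLT_or_trapMatchLT_of_isInducedMatching hM ?_ ?_ ?_
        (hmem z hz).2 (hmem w hw).2
      · rw [(hmem z hz).1]; exact hz
      · rw [(hmem w hw).1]; exact hw
      · rw [(hmem z hz).1, (hmem w hw).1]; rintro rfl; exact hzw rfl)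
  refine ⟨e, fun i _ ↦ ?_, fun i hi ↦ he i (i + 1) i.lt_succ_self (hcard ▸ hi)⟩
  obtain ⟨z, hz, hze⟩ := Finset.mem_image.1 (heM i)
  exact hze ▸ (hmem z hz).2

end DistinctCoords

/-- The maximum size of an induced matching in the trapezoid graph `G(τ)` equals the
maximum length of a chain of matches under the order `TrapMatchLT`. -/
theorem stmt_13 (τ : Set Trapezoid) (hτ : DistinctCoords τ) :
    sSup {k : ℕ | ∃ M : Finset (Sym2 τ),
        IsInducedMatching (trapGraph τ) ↑M ∧ M.card = k} =
      sSup {k : ℕ | ∃ e : ℕ → τ × τ,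
        (∀ i < k, TrapMatch ((e i).1 : Trapezoid) ((e i).2 : Trapezoid)) ∧
        (∀ i, i + 1 < k →
          TrapMatchLT (((e i).1 : Trapezoid), ((e i).2 : Trapezoid))
            (((e (i + 1)).1 : Trapezoid), ((e (i + 1)).2 : Trapezoid)))} := by
  conv_rhs => rw [← Nat.sSup_insert_zero]
  congr 1
  ext k
  simp only [Set.mem_insert_iff, Set.mem_ofPred_eq]
  constructor
  · rintro ⟨M, hM, rfl⟩
    rcases M.eq_empty_or_nonempty with rfl | hne
    · exact Or.inl rfl
    · exact Or.inr (hτ.exists_chain_of_isInducedMatching hM hne)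
  · rintro (rfl | ⟨e, hm, hlt⟩)
    · exact ⟨∅, ⟨by simp, by simp⟩, rfl⟩
    · exact hτ.exists_isInducedMatching_of_chain hm hlt
end
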